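/- Let N ≥ 1 and c ∈ [−1, 1]. Define p : ({0,1}^N) → ℝ by p(a) = (1 + (−1)^{|a|}·c)/2^N, where |a| is the number of ones in a. Then p is a probability distribution (nonnegative, summing to 1), and its Shannon entropy in bits, Σ_a (−p(a)·log₂ p(a)) (with the convention 0·log₂ 0 = 0), equals N − 1 + H_bin((1−c)/2). (The entropy of any parity-symmetric N-bit output distribution with full correlator c is N − 1 + H_bin((1−c)/2); this gives the raw randomness r(φ) = N − 1 + H_bin((1 − sin Nφ)/2) of the two-parameter GHZ strategies, and the entropy N − 1 + H_bin(2^{N−1}ε) of the symmetrized distributions.) -/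
import Mathlib

open Real

/-- The number of ones in an `N`-bit string. -/
def hammingWeight {N : ℕ} (a : Fin N → Bool) : ℕ :=
  (Finset.univ.filter fun i => a i = true).card

/-- The binary entropy function in bits, with `H_bin(0) = H_bin(1) = 0`. -/
noncomputable def Hbin (x : ℝ) : ℝ :=
  -(x * Real.logb 2 x) - (1 - x) * Real.logb 2 (1 - x)

/-- The parity-symmetric `N`-bit distribution `p(a) = (1 + (−1)^{|a|} c)/2^N`. -/
noncomputable def paritySymDist (N : ℕ) (c : ℝ) : (Fin N → Bool) → ℝ := fun a =>
  (1 + (-1 : ℝ) ^ hammingWeight a * c) / 2 ^ N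

lemma signed_sum (N : ℕ) (hN : 1 ≤ N) :
    ∑ a : Fin N → Bool, ((-1 : ℝ)) ^ hammingWeight a = 0 := by
  have h1 : ∀ a : Fin N → Bool, ((-1 : ℝ)) ^ hammingWeight a
      = ∏ i, ((-1 : ℝ)) ^ (if a i = true then 1 else 0) := by
    intro a
    rw [Finset.prod_pow_eq_pow_sum, hammingWeight, Finset.card_filter]
  simp_rw [h1]
  have h2 := Finset.prod_univ_sum (fun _ : Fin N => (Finset.univ : Finset Bool))
    (fun _ b => ((-1 : ℝ)) ^ (if b = true then 1 else 0))
  rw [Fintype.piFinset_univ] at h2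
  rw [← h2]
  have : ∀ i : Fin N, (∑ b : Bool, ((-1 : ℝ)) ^ (if b = true then 1 else 0)) = 0 := by
    intro i; simp
  rw [Finset.prod_congr rfl fun i _ => this i]
  simp [Finset.prod_const, zero_pow (Nat.one_le_iff_ne_zero.mp hN)]

lemma even_card (N : ℕ) (hN : 1 ≤ N) :
    ((Finset.univ.filter fun a : Fin N → Bool => Even (hammingWeight a)).card : ℝ)
      = 2 ^ (N - 1) := by
  have hsplit := Finset.sum_filter_add_sum_filter_not (Finset.univ : Finset (Fin N → Bool))
    (fun a => Even (hammingWeight a)) (fun a => ((-1 : ℝ)) ^ hammingWeight a)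
  rw [signed_sum N hN] at hsplit
  have he : ∑ a ∈ Finset.univ.filter fun a : Fin N → Bool => Even (hammingWeight a),
      ((-1 : ℝ)) ^ hammingWeight a
      = ((Finset.univ.filter fun a : Fin N → Bool => Even (hammingWeight a)).card : ℝ) := by
    rw [Finset.sum_congr rfl (fun a ha => (Finset.mem_filter.mp ha).2.neg_one_pow)]
    simp
  have ho : ∑ a ∈ Finset.univ.filter fun a : Fin N → Bool => ¬ Even (hammingWeight a),
      ((-1 : ℝ)) ^ hammingWeight a
      = -((Finset.univ.filter fun a : Fin N → Bool => ¬ Even (hammingWeight a)).card : ℝ) := by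
    rw [Finset.sum_congr rfl (fun a ha =>
      (Nat.not_even_iff_odd.mp (Finset.mem_filter.mp ha).2).neg_one_pow)]
    simp
  rw [he, ho] at hsplit
  have hcard := Finset.card_filter_add_card_filter_not
    (s := (Finset.univ : Finset (Fin N → Bool))) (fun a => Even (hammingWeight a))
  rw [Finset.card_univ] at hcard
  have hcard' : ((Finset.univ.filter fun a : Fin N → Bool => Even (hammingWeight a)).card : ℝ)
      + ((Finset.univ.filter fun a : Fin N → Bool => ¬ Even (hammingWeight a)).card : ℝ)
      = 2 ^ N := by
    have : (Fintype.card (Fin N → Bool) : ℝ) = 2 ^ N := by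
      simp [Fintype.card_fun]
    rw [← this, ← hcard]; push_cast; ring
  obtain ⟨M, rfl⟩ : ∃ M, N = M + 1 := ⟨N - 1, (Nat.succ_pred_eq_of_pos hN).symm⟩
  simp only [Nat.add_sub_cancel]
  have : (2 : ℝ) ^ (M + 1) = 2 * 2 ^ M := by ring
  rw [this] at hcard'
  linarith

lemma key (k : ℕ) (u : ℝ) (hu : 0 ≤ u) :
    (2 ^ k : ℝ) * (-(u / 2 ^ k * Real.logb 2 (u / 2 ^ k)))
      = -(u * Real.logb 2 u) + k * u := by
  rcases eq_or_lt_of_le hu with h | h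
  · simp [← h]
  · have h2 : ((2 : ℝ) ^ k) ≠ 0 := by positivity
    rw [Real.logb_div (ne_of_gt h) h2, Real.logb_pow]
    have : Real.logb 2 2 = 1 := by simp
    rw [this]
    field_simp
    ring

/-- Any parity-symmetric `N`-bit output distribution with full correlator `c ∈ [−1,1]`
is a probability distribution, and its Shannon entropy in bits equals
`N − 1 + H_bin((1−c)/2)`. -/
theorem paritySymDist_entropy (N : ℕ) (hN : 1 ≤ N) (c : ℝ)
    (hc : c ∈ Set.Icc (-1 : ℝ) 1) :
    (∀ a : Fin N → Bool, 0 ≤ paritySymDist N c a)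
    ∧ (∑ a : Fin N → Bool, paritySymDist N c a = 1)
    ∧ (∑ a : Fin N → Bool, -(paritySymDist N c a * Real.logb 2 (paritySymDist N c a))
        = (N : ℝ) - 1 + Hbin ((1 - c) / 2)) := by
  obtain ⟨hc1, hc2⟩ := hc
  have h2N : ((2 : ℝ) ^ N) ≠ 0 := by positivity
  refine ⟨?_, ?_, ?_⟩
  · intro a
    unfold paritySymDist
    apply div_nonneg _ (by positivity)
    rcases Nat.even_or_odd (hammingWeight a) with h | h
    · rw [h.neg_one_pow]; linarith
    · rw [h.neg_one_pow]; linarith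
  · unfold paritySymDist
    rw [← Finset.sum_div, Finset.sum_add_distrib, ← Finset.sum_mul, signed_sum N hN]
    simp [Fintype.card_fun]
  · -- entropy
    have hEc := even_card N hN
    have hOc : ((Finset.univ.filter fun a : Fin N → Bool => ¬ Even (hammingWeight a)).card : ℝ)
        = 2 ^ (N - 1) := by
      have hcard := Finset.card_filter_add_card_filter_not
        (s := (Finset.univ : Finset (Fin N → Bool))) (fun a => Even (hammingWeight a))
      rw [Finset.card_univ] at hcard
      have h1 : ((Finset.univ.filter fun a : Fin N → Bool => Even (hammingWeight a)).card : ℝ)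
          + ((Finset.univ.filter fun a : Fin N → Bool => ¬ Even (hammingWeight a)).card : ℝ)
          = 2 ^ N := by
        have : (Fintype.card (Fin N → Bool) : ℝ) = 2 ^ N := by simp [Fintype.card_fun]
        rw [← this, ← hcard]; push_cast; ring
      obtain ⟨M, rfl⟩ : ∃ M, N = M + 1 := ⟨N - 1, (Nat.succ_pred_eq_of_pos hN).symm⟩
      simp only [Nat.add_sub_cancel] at hEc ⊢
      have : (2 : ℝ) ^ (M + 1) = 2 * 2 ^ M := by ring
      rw [this] at h1
      linarith
    set f : (Fin N → Bool) → ℝ :=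
      fun a => -(paritySymDist N c a * Real.logb 2 (paritySymDist N c a)) with hf
    have hsplit := Finset.sum_filter_add_sum_filter_not (Finset.univ : Finset (Fin N → Bool))
      (fun a => Even (hammingWeight a)) f
    rw [← hsplit]
    have heval : ∀ a ∈ Finset.univ.filter fun a : Fin N → Bool => Even (hammingWeight a),
        f a = -((1 + c) / 2 ^ N * Real.logb 2 ((1 + c) / 2 ^ N)) := by
      intro a ha
      simp only [hf, paritySymDist, (Finset.mem_filter.mp ha).2.neg_one_pow, one_mul]
    have hoval : ∀ a ∈ Finset.univ.filter fun a : Fin N → Bool => ¬ Even (hammingWeight a),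
        f a = -((1 - c) / 2 ^ N * Real.logb 2 ((1 - c) / 2 ^ N)) := by
      intro a ha
      have hpar : ((-1 : ℝ)) ^ hammingWeight a = -1 :=
        (Nat.not_even_iff_odd.mp (Finset.mem_filter.mp ha).2).neg_one_pow
      have harg : (1 + (-1 : ℝ) * c) = 1 - c := by ring
      simp only [hf, paritySymDist, hpar, harg]
    rw [Finset.sum_congr rfl heval, Finset.sum_congr rfl hoval,
      Finset.sum_const, Finset.sum_const, nsmul_eq_mul, nsmul_eq_mul, hEc, hOc]
    -- now pure computation
    obtain ⟨M, rfl⟩ : ∃ M, N = M + 1 := ⟨N - 1, (Nat.succ_pred_eq_of_pos hN).symm⟩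
    simp only [Nat.add_sub_cancel]
    have hpow : (2 : ℝ) ^ (M + 1) = 2 ^ M * 2 := by ring
    have e1 : (1 + c) / 2 ^ (M + 1) = ((1 + c) / 2) / 2 ^ M := by
      rw [hpow]; ring
    have e2 : (1 - c) / 2 ^ (M + 1) = ((1 - c) / 2) / 2 ^ M := by
      rw [hpow]; ring
    rw [e1, e2, key M ((1 + c) / 2) (by linarith), key M ((1 - c) / 2) (by linarith)]
    have h1 : 1 - (1 - c) / 2 = (1 + c) / 2 := by ring
    rw [Hbin, h1]
    push_cast
    ring
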